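/- Let ℓ ≥ 1 and let λ, μ, ν be partitions of n with at most ℓ parts, and set t = n − ν_1. If |λ_i − μ_i| > t for some index i with 1 ≤ i ≤ ℓ, then g(λ,μ,ν) = 0. -/

import Mathlib

open Finset

/-- A partition with at most `ℓ` parts: a weakly decreasing tuple of naturals. -/
def IsPartition {ℓ : ℕ} (lam : Fin ℓ → ℕ) : Prop :=
  ∀ i j : Fin ℓ, i ≤ j → lam j ≤ lam i

/-- The index type for the `3ℓ` variables `x_1,…,x_ℓ,y_1,…,y_ℓ,z_1,…,z_ℓ`. -/
abbrev KVar (ℓ : ℕ) := Fin ℓ ⊕ (Fin ℓ ⊕ Fin ℓ)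

noncomputable section

/-- The variable `x_i`. -/
def Xv (ℓ : ℕ) (i : Fin ℓ) : MvPowerSeries (KVar ℓ) ℤ := MvPowerSeries.X (Sum.inl i)

/-- The variable `y_j`. -/
def Yv (ℓ : ℕ) (j : Fin ℓ) : MvPowerSeries (KVar ℓ) ℤ := MvPowerSeries.X (Sum.inr (Sum.inl j))

/-- The variable `z_k`. -/
def Zv (ℓ : ℕ) (k : Fin ℓ) : MvPowerSeries (KVar ℓ) ℤ := MvPowerSeries.X (Sum.inr (Sum.inr k))

/-- The Vandermonde product `∏_{i<j} (v i - v j)`. -/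
def vdm (ℓ : ℕ) (v : Fin ℓ → MvPowerSeries (KVar ℓ) ℤ) : MvPowerSeries (KVar ℓ) ℤ :=
  ∏ i : Fin ℓ, ∏ j : Fin ℓ, if i < j then v i - v j else 1

/-- The Cauchy kernel `∏_{i,j,k} (1 - x_i y_j z_k)⁻¹`. -/
def cauchyKernel (ℓ : ℕ) : MvPowerSeries (KVar ℓ) ℤ :=
  ∏ i : Fin ℓ, ∏ j : Fin ℓ, ∏ k : Fin ℓ,
    MvPowerSeries.invOfUnit (1 - Xv ℓ i * Yv ℓ j * Zv ℓ k) 1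

/-- The truncated Cauchy kernel `∏_{i,j,k} (1 + x_iy_jz_k + ⋯ + (x_iy_jz_k)^D)`. -/
def truncKernel (ℓ D : ℕ) : MvPowerSeries (KVar ℓ) ℤ :=
  ∏ i : Fin ℓ, ∏ j : Fin ℓ, ∏ k : Fin ℓ,
    ∑ d ∈ Finset.range (D + 1), (Xv ℓ i * Yv ℓ j * Zv ℓ k) ^ d

/-- The exponent vector of the monomial `∏ x_i^{a_i} ∏ y_j^{b_j} ∏ z_k^{c_k}`. -/
def expVec3 (ℓ : ℕ) (a b c : Fin ℓ → ℕ) : KVar ℓ →₀ ℕ :=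
  Finsupp.equivFunOnFinite.symm (Sum.elim a (Sum.elim b c))

/-- The staircase-shifted exponent vector of
`∏ x_i^{λ_i+ℓ-i} ∏ y_j^{μ_j+ℓ-j} ∏ z_k^{ν_k+ℓ-k}` (here `i,j,k` are 0-based). -/
def kronExp (ℓ : ℕ) (lam mu nu : Fin ℓ → ℕ) : KVar ℓ →₀ ℕ :=
  expVec3 ℓ (fun i => lam i + (ℓ - 1 - (i : ℕ))) (fun j => mu j + (ℓ - 1 - (j : ℕ)))
    (fun k => nu k + (ℓ - 1 - (k : ℕ)))

/-- The Kronecker coefficient `g(λ,μ,ν)`, defined as the coefficient of the monomial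
`∏ x_i^{λ_i+ℓ-i} ∏ y_j^{μ_j+ℓ-j} ∏ z_k^{ν_k+ℓ-k}` in
`Δ(x)Δ(y)Δ(z) ∏_{i,j,k} (1-x_iy_jz_k)⁻¹`. -/
def kron (ℓ : ℕ) (lam mu nu : Fin ℓ → ℕ) : ℤ :=
  MvPowerSeries.coeff (kronExp ℓ lam mu nu)
    (vdm ℓ (Xv ℓ) * vdm ℓ (Yv ℓ) * vdm ℓ (Zv ℓ) * cauchyKernel ℓ)

end

/-!
Write `z₀ = z_1`, `δ_i = ℓ - i` and `c = ℓ(ℓ-1)/2`. By Cauchy's determinant,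
`z₀^c Δ(x) Δ(y) ∏_{i,j} (1 - x_i y_j z₀)⁻¹ = det [(1 - x_i y_j z₀)⁻¹]`, so `z₀^c` times the
generating series equals `Δ(z) · det [(1 - x_i y_j z₀)⁻¹] · ∏_{k ≠ 1} ∏_{i,j} (1 - x_i y_j z_k)⁻¹`.
In a monomial of the term `∏_i (1 - x_{ρ i} y_i z₀)⁻¹` of the determinant, `x_{ρ i}` and `y_i`
have equal exponents, and in a monomial of the last factor every single exponent of an `x_i` or
a `y_j` is at most its degree `T` in `z_2, …, z_ℓ`. Comparing `z`-degrees with those of the target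
monomial `x^{λ+δ} y^{μ+δ} z^{ν+δ} z₀^c` gives `T ≤ n - ν_1`, and comparing `x`- and
`y`-exponents gives `|(λ+δ)_{ρ i} - (μ+δ)_i| ≤ T` for all `i`. Since `λ+δ` and `μ+δ` are both
decreasing, the identity matching is at least as good as `ρ`, hence `|λ_i - μ_i| ≤ n - ν_1`.
-/

theorem Equiv.Perm.exists_le_le_apply {ι : Type*} [LinearOrder ι] [Fintype ι]
    (ρ : Equiv.Perm ι) (i : ι) : ∃ j ≤ i, i ≤ ρ j := by
  classical
  by_contra! h
  have hmaps : ∀ j ∈ univ.filter (· ≤ i), ρ j ∈ univ.filter (· < i) := fun j hj =>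
    mem_filter.mpr ⟨mem_univ _, h j (mem_filter.mp hj).2⟩
  have hsub : univ.filter (· < i) ⊂ univ.filter (· ≤ i) :=
    ssubset_iff_of_subset (monotone_filter_right _ fun _ _ => le_of_lt) |>.mpr
      ⟨i, by simp, by simp⟩
  exact (card_lt_card hsub).not_ge (card_le_card_of_injOn ρ hmaps ρ.injective.injOn)

theorem abs_sub_le_of_abs_sub_perm_le {ι α : Type*} [LinearOrder ι] [Fintype ι]
    [AddCommGroup α] [LinearOrder α] [IsOrderedAddMonoid α] {a b : ι → α}
    (ha : Antitone a) (hb : Antitone b) (ρ : Equiv.Perm ι) {T : α}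
    (h : ∀ i, |a (ρ i) - b i| ≤ T) (i : ι) : |a i - b i| ≤ T := by
  rw [abs_sub_le_iff]
  constructor
  · obtain ⟨j, hji, hij⟩ := Equiv.Perm.exists_le_le_apply ρ.symm i
    calc a i - b i ≤ a (ρ (ρ.symm j)) - b (ρ.symm j) := by
          rw [Equiv.apply_symm_apply]; exact sub_le_sub (ha hji) (hb hij)
      _ ≤ T := (abs_sub_le_iff.mp (h _)).1
  · obtain ⟨j, hji, hij⟩ := ρ.exists_le_le_apply i
    calc b i - a i ≤ b j - a (ρ j) := sub_le_sub (hb hji) (ha hij)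
      _ ≤ T := (abs_sub_le_iff.mp (h j)).2

theorem Fin.sum_univ_val_eq_choose_two (ℓ : ℕ) : ∑ m : Fin ℓ, (m : ℕ) = ℓ.choose 2 := by
  rw [Fin.sum_univ_eq_sum_range (fun m => m) ℓ, sum_range_id, Nat.choose_two_right]

theorem Finset.prod_add_mul_eq_sum_powersetCard {ι R : Type*} [CommSemiring R] (s : Finset ι)
    (y : ι → R) (a c : R) :
    ∏ i ∈ s, (a + c * y i) =
      ∑ m ∈ range (#s + 1), a ^ (#s - m) * c ^ m * ∑ t ∈ powersetCard m s, ∏ i ∈ t, y i := by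
  classical
  simp_rw [add_comm a, Finset.prod_add, Finset.sum_powerset, Finset.mul_sum]
  refine sum_congr rfl fun m _ => sum_congr rfl fun t ht => ?_
  obtain ⟨hts, rfl⟩ := mem_powersetCard.mp ht
  rw [prod_const, card_sdiff_of_subset hts, prod_mul_distrib, prod_const]
  ring

theorem Fin.prod_prod_erase_eq {M : Type*} [CommMonoid M] {ℓ : ℕ} (f : Fin ℓ → Fin ℓ → M) :
    ∏ j, ∏ j' ∈ univ.erase j, f j j' =
      (∏ i, ∏ j ∈ Ioi i, f j i) * ∏ i, ∏ j ∈ Ioi i, f i j := by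
  have hsplit : ∀ j, ∏ j' ∈ univ.erase j, f j j' = (∏ j' ∈ Iio j, f j j') * ∏ j' ∈ Ioi j, f j j' :=
    fun j => by rw [← compl_singleton, ← Ioi_disjUnion_Iio, prod_disjUnion, mul_comm]
  rw [prod_congr rfl fun j _ => hsplit j, prod_mul_distrib]
  congr 1
  exact prod_comm' fun _ _ => by simp

namespace Matrix

variable {R : Type*} [CommRing R] {ℓ : ℕ}

/- `∏_{j' ≠ j} (1 - X_i Y_{j'} Z)` and `∏_{j' ≠ j} (Y_i - Y_{j'})` are polynomials in `X_i`, resp.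
`Y_i`, whose coefficients are `± esymmErase Y m j`. This factors both matrices through
`esymmErase Y`, and the second one is diagonal, which yields `det (esymmErase Y)`. -/
def esymmErase (Y : Fin ℓ → R) : Matrix (Fin ℓ) (Fin ℓ) R :=
  of fun m j => ∑ t ∈ powersetCard m (univ.erase j), ∏ j' ∈ t, Y j'

theorem prod_erase_add_mul (Y : Fin ℓ → R) (a c : R) (j : Fin ℓ) :
    ∏ j' ∈ univ.erase j, (a + c * Y j') =
      ∑ m : Fin ℓ, a ^ (ℓ - 1 - m) * c ^ (m : ℕ) * esymmErase Y m j := by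
  have hcard : #(univ.erase j) + 1 = ℓ := by
    rw [card_erase_of_mem (mem_univ j), card_univ, Fintype.card_fin]; have := j.pos; omega
  rw [prod_add_mul_eq_sum_powersetCard, hcard, card_erase_of_mem (mem_univ j), card_univ,
    Fintype.card_fin]
  exact (Fin.sum_univ_eq_sum_range (fun m => a ^ (ℓ - 1 - m) * c ^ m *
    ∑ t ∈ powersetCard m (univ.erase j), ∏ j' ∈ t, Y j') ℓ).symm

theorem of_prod_erase_one_sub_eq_mul (X Y : Fin ℓ → R) (Z : R) :
    of (fun i j => ∏ j' ∈ univ.erase j, (1 - X i * Y j' * Z)) =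
      vandermonde X * of fun (m j : Fin ℓ) => (-Z) ^ (m : ℕ) * esymmErase Y m j := by
  ext i j
  rw [of_apply, mul_apply]
  calc ∏ j' ∈ univ.erase j, (1 - X i * Y j' * Z)
      = ∏ j' ∈ univ.erase j, (1 + -(X i * Z) * Y j') := prod_congr rfl fun _ _ => by ring
    _ = _ := by
      rw [prod_erase_add_mul]
      refine sum_congr rfl fun m _ => ?_
      rw [vandermonde_apply, of_apply]
      ring

theorem of_prod_erase_sub_eq_mul (Y : Fin ℓ → R) :
    of (fun i j => ∏ j' ∈ univ.erase j, (Y i - Y j')) =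
      projVandermonde 1 Y * of fun (m j : Fin ℓ) => (-1) ^ (m : ℕ) * esymmErase Y m j := by
  ext i j
  rw [of_apply, mul_apply]
  calc ∏ j' ∈ univ.erase j, (Y i - Y j')
      = ∏ j' ∈ univ.erase j, (Y i + -1 * Y j') := prod_congr rfl fun _ _ => by ring
    _ = _ := by
      rw [prod_erase_add_mul]
      refine sum_congr rfl fun m _ => ?_
      rw [projVandermonde_apply, of_apply, Pi.one_apply, one_pow, one_mul, Fin.val_rev]
      rw [show ℓ - (m + 1) = ℓ - 1 - m by omega]
      ring

theorem det_of_prod_erase_sub (Y : Fin ℓ → R) :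
    (of fun i j => ∏ j' ∈ univ.erase j, (Y i - Y j')).det =
      (vandermonde Y).det * (projVandermonde 1 Y).det := by
  have hdiag : (of fun i j => ∏ j' ∈ univ.erase j, (Y i - Y j')) =
      diagonal fun j => ∏ j' ∈ univ.erase j, (Y j - Y j') := by
    ext i j
    rcases eq_or_ne i j with rfl | hij
    · simp
    · rw [diagonal_apply_ne _ hij, of_apply]
      exact prod_eq_zero (mem_erase.mpr ⟨hij, mem_univ i⟩) (sub_self _)
  rw [hdiag, det_diagonal, Fin.prod_prod_erase_eq, det_vandermonde, det_projVandermonde]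
  simp only [Pi.one_apply, one_mul]

theorem det_projVandermonde_one_ne_zero [IsDomain R] {Y : Fin ℓ → R}
    (hY : Function.Injective Y) : (projVandermonde 1 Y).det ≠ 0 := by
  rw [det_projVandermonde]
  refine prod_ne_zero_iff.mpr fun i _ => prod_ne_zero_iff.mpr fun j hj => ?_
  simpa [sub_eq_zero] using hY.ne (mem_Ioi.mp hj).ne

theorem neg_one_pow_mul_det_esymmErase [IsDomain R] {Y : Fin ℓ → R}
    (hY : Function.Injective Y) :
    (-1) ^ ℓ.choose 2 * (esymmErase Y).det = (vandermonde Y).det := by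
  have key := congrArg det (of_prod_erase_sub_eq_mul Y)
  rw [det_of_prod_erase_sub, det_mul, det_mul_column, prod_pow_eq_pow_sum,
    Fin.sum_univ_val_eq_choose_two, mul_comm (vandermonde Y).det] at key
  exact (mul_left_cancel₀ (det_projVandermonde_one_ne_zero hY) key).symm

theorem det_of_prod_erase_one_sub [IsDomain R] (X : Fin ℓ → R) {Y : Fin ℓ → R}
    (hY : Function.Injective Y) (Z : R) :
    (of fun i j => ∏ j' ∈ univ.erase j, (1 - X i * Y j' * Z)).det =
      Z ^ ℓ.choose 2 * (vandermonde X).det * (vandermonde Y).det := by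
  rw [of_prod_erase_one_sub_eq_mul, det_mul, det_mul_column, prod_pow_eq_pow_sum,
    Fin.sum_univ_val_eq_choose_two, ← neg_one_pow_mul_det_esymmErase hY, neg_pow]
  ring

theorem det_cauchy [IsDomain R] (X : Fin ℓ → R) {Y : Fin ℓ → R}
    (hY : Function.Injective Y) (Z : R) (D : Matrix (Fin ℓ) (Fin ℓ) R)
    (hD : ∀ i j, (1 - X i * Y j * Z) * D i j = 1) :
    D.det = Z ^ ℓ.choose 2 * (vandermonde X).det * (vandermonde Y).det * ∏ i, ∏ j, D i j := by
  have hE : (of fun i j => ∏ j' ∈ univ.erase j, (1 - X i * Y j' * Z)) =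
      of fun i j => (∏ j', (1 - X i * Y j' * Z)) * D i j := by
    ext i j
    rw [of_apply, of_apply, ← mul_prod_erase univ _ (mem_univ j), mul_right_comm, hD, one_mul]
  have hGD : (∏ i, ∏ j, (1 - X i * Y j * Z)) * ∏ i, ∏ j, D i j = 1 := by
    simp only [← prod_mul_distrib, hD, prod_const_one]
  have hdet := congrArg det hE
  rw [det_of_prod_erase_one_sub X hY, det_mul_column] at hdet
  calc D.det = ((∏ i, ∏ j, (1 - X i * Y j * Z)) * ∏ i, ∏ j, D i j) * D.det := by
        rw [hGD, one_mul]
    _ = _ := by rw [hdet]; ring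

theorem det_vandermonde_mul_det_vandermonde (X Y : Fin ℓ → R) :
    (vandermonde X).det * (vandermonde Y).det =
      (projVandermonde 1 X).det * (projVandermonde 1 Y).det := by
  simp only [det_vandermonde, det_projVandermonde, Pi.one_apply, one_mul, ← prod_mul_distrib]
  exact prod_congr rfl fun _ _ => prod_congr rfl fun _ _ => by ring

end Matrix

namespace MvPowerSeries

open scoped Pointwise

variable {σ R : Type*}

def SupportedIn [Semiring R] (S : Set (σ →₀ ℕ)) (f : MvPowerSeries σ R) : Prop :=
  ∀ v ∉ S, coeff v f = 0

section Semiring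

variable [Semiring R] {S T : Set (σ →₀ ℕ)} {f g : MvPowerSeries σ R}

theorem SupportedIn.mono (hf : SupportedIn S f) (h : S ⊆ T) : SupportedIn T f :=
  fun v hv => hf v fun hS => hv (h hS)

theorem SupportedIn.mul (hf : SupportedIn S f) (hg : SupportedIn T g) :
    SupportedIn (S + T) (f * g) := by
  classical
  intro v hv
  rw [coeff_mul]
  refine sum_eq_zero fun p hp => ?_
  by_cases hp₁ : p.1 ∈ S
  · rw [hg p.2 fun hp₂ => hv (mem_antidiagonal.mp hp ▸ Set.add_mem_add hp₁ hp₂), mul_zero]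
  · rw [hf p.1 hp₁, zero_mul]

theorem supportedIn_monomial (u : σ →₀ ℕ) (r : R) : SupportedIn {u} (monomial u r) := by
  classical
  exact fun v hv => by rw [coeff_monomial, if_neg fun h => hv (Set.mem_singleton_iff.mpr h)]

theorem supportedIn_sum {ι : Type*} {s : Finset ι} {f : ι → MvPowerSeries σ R}
    (hf : ∀ i ∈ s, SupportedIn S (f i)) : SupportedIn S (∑ i ∈ s, f i) :=
  fun v hv => by rw [map_sum]; exact sum_eq_zero fun i hi => hf i hi v hv

end Semiring

theorem supportedIn_prod [CommSemiring R] {S : AddSubmonoid (σ →₀ ℕ)} {ι : Type*}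
    {s : Finset ι} {f : ι → MvPowerSeries σ R} (hf : ∀ i ∈ s, SupportedIn S (f i)) :
    SupportedIn S (∏ i ∈ s, f i) := by
  classical
  induction s using Finset.induction_on with
  | empty =>
    rw [prod_empty]
    exact fun v hv => by rw [coeff_one, if_neg fun (h : v = 0) => hv (h ▸ S.zero_mem)]
  | insert a s ha ih =>
    rw [prod_insert ha]
    refine ((hf a (mem_insert_self a s)).mul (ih fun i hi => hf i (mem_insert_of_mem hi))).mono ?_
    rintro _ ⟨x, hx, y, hy, rfl⟩
    exact S.add_mem hx hy

theorem supportedIn_invOfUnit_one_sub_monomial [Ring R] {S : AddSubmonoid (σ →₀ ℕ)}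
    {w : σ →₀ ℕ} (hwS : w ∈ S) (hw : w ≠ 0) :
    SupportedIn S (invOfUnit (1 - monomial w (1 : R)) 1) := by
  classical
  set g := invOfUnit (1 - monomial w (1 : R)) 1
  have hg : g = monomial w 1 * g + 1 := by
    have h := mul_invOfUnit (1 - monomial w (1 : R)) 1 (by
      rw [map_sub, map_one, ← coeff_zero_eq_constantCoeff_apply, coeff_monomial,
        if_neg hw.symm, sub_zero, Units.val_one])
    rwa [sub_mul, one_mul, sub_eq_iff_eq_add'] at h
  intro v hv
  induction v using WellFoundedLT.induction with
  | ind v ih =>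
    rw [hg, map_add, coeff_one, if_neg fun (h : v = 0) => hv (h ▸ S.zero_mem), coeff_monomial_mul,
      add_zero]
    split_ifs with hwv
    · have hlt : v - w < v := tsub_le_self.lt_of_ne fun h => hw <| by
        have := tsub_add_cancel_of_le hwv
        rwa [h, add_eq_left] at this
      rw [ih (v - w) hlt fun h => hv ?_, mul_zero]
      simpa [tsub_add_cancel_of_le hwv] using S.add_mem h hwS
    · rfl

theorem supportedIn_det [CommRing R] {n : Type*} [Fintype n] [DecidableEq n]
    {M : Matrix n n (MvPowerSeries σ R)} {S : Equiv.Perm n → Set (σ →₀ ℕ)}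
    (h : ∀ ρ, SupportedIn (S ρ) (∏ i, M (ρ i) i)) : SupportedIn (⋃ ρ, S ρ) M.det := by
  rw [Matrix.det_apply]
  refine supportedIn_sum fun ρ _ v hv => ?_
  rw [Units.smul_def, map_zsmul, h ρ v fun h' => hv (Set.mem_iUnion.mpr ⟨ρ, h'⟩), smul_zero]

end MvPowerSeries

@[simp] theorem expVec3_inl {ℓ : ℕ} (a b c : Fin ℓ → ℕ) (i : Fin ℓ) :
    expVec3 ℓ a b c (Sum.inl i) = a i := rfl

@[simp] theorem expVec3_inr_inl {ℓ : ℕ} (a b c : Fin ℓ → ℕ) (j : Fin ℓ) :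
    expVec3 ℓ a b c (Sum.inr (Sum.inl j)) = b j := rfl

@[simp] theorem expVec3_inr_inr {ℓ : ℕ} (a b c : Fin ℓ → ℕ) (k : Fin ℓ) :
    expVec3 ℓ a b c (Sum.inr (Sum.inr k)) = c k := rfl

section Kronecker

open MvPowerSeries Matrix

open scoped Pointwise

variable {ℓ : ℕ}

theorem Xv_mul_Yv_mul_Zv (i j k : Fin ℓ) :
    Xv ℓ i * Yv ℓ j * Zv ℓ k =
      monomial (expVec3 ℓ (Pi.single i 1) (Pi.single j 1) (Pi.single k 1)) 1 := by
  rw [Xv, Yv, Zv, X_def, X_def, X_def, monomial_mul_monomial, monomial_mul_monomial, one_mul,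
    one_mul]
  refine congrArg (monomial · 1) ?_
  ext (i' | j' | k') <;> simp [Finsupp.single_apply, Pi.single_apply, eq_comm]

theorem prod_Zv_pow (c : Fin ℓ → ℕ) : ∏ k, Zv ℓ k ^ c k = monomial (expVec3 ℓ 0 0 c) 1 := by
  simp only [Zv, X_pow_eq, prod_monomial, prod_const_one]
  refine congrArg (monomial · 1) ?_
  ext (i | j | k) <;> simp [Finsupp.finsetSum_apply, Finsupp.single_apply]

noncomputable def cauchyFactor (i j k : Fin ℓ) : MvPowerSeries (KVar ℓ) ℤ :=
  invOfUnit (1 - Xv ℓ i * Yv ℓ j * Zv ℓ k) 1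

theorem one_sub_mul_cauchyFactor (i j k : Fin ℓ) :
    (1 - Xv ℓ i * Yv ℓ j * Zv ℓ k) * cauchyFactor i j k = 1 :=
  mul_invOfUnit _ _ (by simp [Xv, Yv, Zv])

theorem supportedIn_cauchyFactor {S : AddSubmonoid (KVar ℓ →₀ ℕ)} {i j k : Fin ℓ}
    (h : expVec3 ℓ (Pi.single i 1) (Pi.single j 1) (Pi.single k 1) ∈ S) :
    SupportedIn S (cauchyFactor i j k) := by
  rw [cauchyFactor, Xv_mul_Yv_mul_Zv]
  refine supportedIn_invOfUnit_one_sub_monomial h fun h0 => ?_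
  simpa using DFunLike.congr_fun h0 (Sum.inl i)

theorem cauchyKernel_eq_mul (z₀ : Fin ℓ) :
    cauchyKernel ℓ = (∏ i, ∏ j, cauchyFactor i j z₀) *
      ∏ k ∈ univ.erase z₀, ∏ i, ∏ j, cauchyFactor i j k := by
  calc cauchyKernel ℓ = ∏ i, ∏ j, ∏ k, cauchyFactor i j k := rfl
    _ = ∏ i, ∏ k, ∏ j, cauchyFactor i j k := prod_congr rfl fun _ _ => prod_comm
    _ = ∏ k, ∏ i, ∏ j, cauchyFactor i j k := prod_comm
    _ = _ := (mul_prod_erase univ (fun k => ∏ i, ∏ j, cauchyFactor i j k) (mem_univ z₀)).symm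

theorem vdm_eq_det (v : Fin ℓ → MvPowerSeries (KVar ℓ) ℤ) :
    vdm ℓ v = (projVandermonde 1 v).det := by
  rw [vdm, det_projVandermonde]
  refine prod_congr rfl fun i _ => ?_
  rw [← prod_filter, filter_lt_eq_Ioi]
  simp

theorem Zv_pow_mul_vdm_mul_vdm_mul_prod_cauchyFactor (z₀ : Fin ℓ) :
    Zv ℓ z₀ ^ ℓ.choose 2 * vdm ℓ (Xv ℓ) * vdm ℓ (Yv ℓ) * ∏ i, ∏ j, cauchyFactor i j z₀ =
      (of fun i j => cauchyFactor i j z₀).det := by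
  have : IsDomain (MvPowerSeries (KVar ℓ) ℤ) := NoZeroDivisors.to_isDomain _
  have hY : Function.Injective (Yv ℓ) := fun j j' h => by
    simpa [Yv, X_inj] using h
  rw [det_cauchy (Xv ℓ) hY (Zv ℓ z₀) (of fun i j => cauchyFactor i j z₀)
      fun i j => one_sub_mul_cauchyFactor i j z₀, vdm_eq_det, vdm_eq_det,
    mul_assoc (Zv ℓ z₀ ^ _), ← det_vandermonde_mul_det_vandermonde]
  simp only [of_apply, mul_assoc]

def vdmExps (ℓ : ℕ) : Set (KVar ℓ →₀ ℕ) :=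
  Set.range fun σ : Equiv.Perm (Fin ℓ) => expVec3 ℓ 0 0 fun k => ℓ - 1 - (σ.symm k : ℕ)

theorem supportedIn_vdm_Zv : SupportedIn (vdmExps ℓ) (vdm ℓ (Zv ℓ)) := by
  rw [vdm_eq_det, vdmExps, ← Set.iUnion_singleton_eq_range]
  refine supportedIn_det fun σ => ?_
  have hσ : ∏ i, projVandermonde 1 (Zv ℓ) (σ i) i =
      monomial (expVec3 ℓ 0 0 fun k => ℓ - 1 - (σ.symm k : ℕ)) 1 := by
    rw [← prod_Zv_pow, ← Equiv.prod_comp σ fun k => Zv ℓ k ^ (ℓ - 1 - (σ.symm k : ℕ))]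
    refine prod_congr rfl fun i _ => ?_
    rw [projVandermonde_apply, Pi.one_apply, one_pow, one_mul, Fin.val_rev, σ.symm_apply_apply]
    congr 1
    omega
  rw [hσ]
  exact supportedIn_monomial _ _

def matchedExps (z₀ : Fin ℓ) (ρ : Equiv.Perm (Fin ℓ)) : AddSubmonoid (KVar ℓ →₀ ℕ) where
  carrier := {v | (∀ i, v (Sum.inl (ρ i)) = v (Sum.inr (Sum.inl i))) ∧
    ∀ k ≠ z₀, v (Sum.inr (Sum.inr k)) = 0}
  add_mem' := by
    rintro v w ⟨hv, hv'⟩ ⟨hw, hw'⟩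
    exact ⟨fun i => by simp [hv, hw], fun k hk => by simp [hv' k hk, hw' k hk]⟩
  zero_mem' := ⟨fun _ => rfl, fun _ _ => rfl⟩

theorem mem_matchedExps {z₀ : Fin ℓ} {ρ : Equiv.Perm (Fin ℓ)} {v : KVar ℓ →₀ ℕ} :
    v ∈ matchedExps z₀ ρ ↔ (∀ i, v (Sum.inl (ρ i)) = v (Sum.inr (Sum.inl i))) ∧
      ∀ k ≠ z₀, v (Sum.inr (Sum.inr k)) = 0 :=
  Iff.rfl

theorem supportedIn_det_cauchyFactor (z₀ : Fin ℓ) :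
    SupportedIn (⋃ ρ, (matchedExps z₀ ρ : Set (KVar ℓ →₀ ℕ)))
      (of fun i j => cauchyFactor i j z₀).det :=
  supportedIn_det fun ρ => supportedIn_prod fun i _ => supportedIn_cauchyFactor
    ⟨fun i' => by simp [Pi.single_apply, ρ.injective.eq_iff], fun k hk => by simp [hk]⟩

def offSliceDeg (z₀ : Fin ℓ) (v : KVar ℓ →₀ ℕ) : ℕ :=
  ∑ k ∈ univ.erase z₀, v (Sum.inr (Sum.inr k))

def offSliceExps (z₀ : Fin ℓ) : AddSubmonoid (KVar ℓ →₀ ℕ) where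
  carrier := {v | ∀ i, v (Sum.inl i) ≤ offSliceDeg z₀ v ∧
    v (Sum.inr (Sum.inl i)) ≤ offSliceDeg z₀ v}
  add_mem' := by
    intro v w hv hw i
    simp only [Set.mem_ofPred_eq, offSliceDeg, Finsupp.add_apply, sum_add_distrib] at hv hw ⊢
    exact ⟨add_le_add (hv i).1 (hw i).1, add_le_add (hv i).2 (hw i).2⟩
  zero_mem' := fun _ => by simp

theorem mem_offSliceExps {z₀ : Fin ℓ} {v : KVar ℓ →₀ ℕ} :
    v ∈ offSliceExps z₀ ↔
      ∀ i, v (Sum.inl i) ≤ offSliceDeg z₀ v ∧ v (Sum.inr (Sum.inl i)) ≤ offSliceDeg z₀ v :=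
  Iff.rfl

theorem supportedIn_prod_offSlice (z₀ : Fin ℓ) :
    SupportedIn (offSliceExps z₀) (∏ k ∈ univ.erase z₀, ∏ i, ∏ j, cauchyFactor i j k) :=
  supportedIn_prod fun k hk => supportedIn_prod fun i _ => supportedIn_prod fun j _ =>
    supportedIn_cauchyFactor fun i' => by
      have hdeg :
          offSliceDeg z₀ (expVec3 ℓ (Pi.single i 1) (Pi.single j 1) (Pi.single k 1)) = 1 := by
        simp [offSliceDeg, sum_pi_single', hk]
      simp only [hdeg, expVec3_inl, expVec3_inr_inl, Pi.single_apply]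
      constructor <;> split_ifs <;> simp

theorem IsPartition.antitone_add_staircase {lam : Fin ℓ → ℕ} (h : IsPartition lam) :
    Antitone fun i : Fin ℓ => lam i + (ℓ - 1 - (i : ℕ)) := fun i j hij => by
  dsimp only
  have := h i j hij
  have : (i : ℕ) ≤ j := hij
  omega

theorem offSliceDeg_add_nu_le (hℓ : 1 ≤ ℓ) {lam mu nu : Fin ℓ → ℕ} {n c : ℕ}
    (hnsum : ∑ k, nu k = n) {u v₁ v₂ : KVar ℓ →₀ ℕ} (hu : u ∈ vdmExps ℓ)
    (hv₁ : ∀ k ≠ ⟨0, hℓ⟩, v₁ (Sum.inr (Sum.inr k)) = 0)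
    (h : u + v₁ + v₂ = Finsupp.single (Sum.inr (Sum.inr ⟨0, hℓ⟩)) c + kronExp ℓ lam mu nu) :
    offSliceDeg ⟨0, hℓ⟩ v₂ + nu ⟨0, hℓ⟩ ≤ n := by
  obtain ⟨σ, rfl⟩ := hu
  set z₀ : Fin ℓ := ⟨0, hℓ⟩
  have hk : ∀ k ∈ univ.erase z₀,
      (ℓ - 1 - (σ.symm k : ℕ)) + v₂ (Sum.inr (Sum.inr k)) = nu k + (ℓ - 1 - k) := fun k hk => by
    have := DFunLike.congr_fun h (Sum.inr (Sum.inr k))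
    simpa [kronExp, hv₁ k (ne_of_mem_erase hk), Finsupp.single_apply, Ne.symm (ne_of_mem_erase hk)]
      using this
  have hsum := sum_congr rfl hk
  have hu_sum := add_sum_erase univ (fun k => ℓ - 1 - (σ.symm k : ℕ)) (mem_univ z₀)
  rw [Equiv.sum_comp σ.symm (fun k : Fin ℓ => ℓ - 1 - (k : ℕ))] at hu_sum
  have hkron_sum := add_sum_erase univ (fun k => nu k + (ℓ - 1 - (k : ℕ))) (mem_univ z₀)
  simp only [sum_add_distrib, hnsum] at hsum hkron_sum
  have hz₀ : (z₀ : ℕ) = 0 := rfl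
  unfold offSliceDeg
  omega

theorem single_add_kronExp_notMem (hℓ : 1 ≤ ℓ) {lam mu nu : Fin ℓ → ℕ} {n : ℕ}
    (hlam : IsPartition lam) (hmu : IsPartition mu) (hnsum : ∑ k, nu k = n) {i : Fin ℓ}
    (hi : ((n : ℤ) - (nu ⟨0, hℓ⟩ : ℤ)) < |(lam i : ℤ) - (mu i : ℤ)|) (c : ℕ) :
    Finsupp.single (Sum.inr (Sum.inr ⟨0, hℓ⟩)) c + kronExp ℓ lam mu nu ∉
      vdmExps ℓ + (⋃ ρ, (matchedExps ⟨0, hℓ⟩ ρ : Set (KVar ℓ →₀ ℕ))) + offSliceExps ⟨0, hℓ⟩ := by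
  rintro ⟨_, ⟨u, hu, v₁, hv₁, rfl⟩, v₂, hv₂, h⟩
  obtain ⟨ρ, hv₁⟩ := Set.mem_iUnion.mp hv₁
  obtain ⟨hmatch, hslice⟩ := mem_matchedExps.mp hv₁
  have hT := offSliceDeg_add_nu_le hℓ hnsum hu hslice h
  obtain ⟨σ, rfl⟩ := hu
  have hx : ∀ i, v₁ (Sum.inl i) + v₂ (Sum.inl i) = lam i + (ℓ - 1 - i) := fun i => by
    simpa [kronExp] using DFunLike.congr_fun h (Sum.inl i)
  have hy : ∀ i, v₁ (Sum.inr (Sum.inl i)) + v₂ (Sum.inr (Sum.inl i)) = mu i + (ℓ - 1 - i) :=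
    fun i => by simpa [kronExp] using DFunLike.congr_fun h (Sum.inr (Sum.inl i))
  have hclose : ∀ i, |((lam (ρ i) + (ℓ - 1 - (ρ i : ℕ)) : ℕ) : ℤ) -
      ((mu i + (ℓ - 1 - (i : ℕ)) : ℕ) : ℤ)| ≤ (offSliceDeg ⟨0, hℓ⟩ v₂ : ℤ) := fun i => by
    have := hx (ρ i); have := hy i; have := hmatch i
    have := mem_offSliceExps.mp hv₂ (ρ i); have := mem_offSliceExps.mp hv₂ i
    rw [abs_sub_le_iff]
    omega
  have key := abs_sub_le_of_abs_sub_perm_le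
    (Nat.mono_cast.comp_antitone hlam.antitone_add_staircase)
    (Nat.mono_cast.comp_antitone hmu.antitone_add_staircase) ρ hclose i
  have hshift : ((lam i + (ℓ - 1 - (i : ℕ)) : ℕ) : ℤ) - ((mu i + (ℓ - 1 - (i : ℕ)) : ℕ) : ℤ) =
      lam i - mu i := by push_cast; ring
  simp only [Function.comp_apply, hshift] at key
  have hT' : (offSliceDeg ⟨0, hℓ⟩ v₂ : ℤ) + nu ⟨0, hℓ⟩ ≤ n := by exact_mod_cast hT
  linarith

theorem kron_eq_coeff (z₀ : Fin ℓ) (c : ℕ) (lam mu nu : Fin ℓ → ℕ) :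
    kron ℓ lam mu nu = coeff (Finsupp.single (Sum.inr (Sum.inr z₀)) c + kronExp ℓ lam mu nu)
      (Zv ℓ z₀ ^ c * (vdm ℓ (Xv ℓ) * vdm ℓ (Yv ℓ) * vdm ℓ (Zv ℓ) * cauchyKernel ℓ)) := by
  rw [Zv, X_pow_eq, coeff_monomial_mul, if_pos le_self_add, one_mul, add_tsub_cancel_left, kron]

theorem Zv_pow_mul_vdm_mul_cauchyKernel (z₀ : Fin ℓ) :
    Zv ℓ z₀ ^ ℓ.choose 2 * (vdm ℓ (Xv ℓ) * vdm ℓ (Yv ℓ) * vdm ℓ (Zv ℓ) * cauchyKernel ℓ) =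
      vdm ℓ (Zv ℓ) * (of fun i j => cauchyFactor i j z₀).det *
        ∏ k ∈ univ.erase z₀, ∏ i, ∏ j, cauchyFactor i j k := by
  rw [cauchyKernel_eq_mul z₀, ← Zv_pow_mul_vdm_mul_vdm_mul_prod_cauchyFactor]
  ring

end Kronecker

theorem stmt0_general (ℓ n : ℕ) (hℓ : 1 ≤ ℓ)
    (lam mu nu : Fin ℓ → ℕ)
    (hlam : IsPartition lam) (hmu : IsPartition mu)
    (hnsum : ∑ i, nu i = n)
    (i : Fin ℓ)
    (hi : ((n : ℤ) - (nu ⟨0, hℓ⟩ : ℤ)) < |(lam i : ℤ) - (mu i : ℤ)|) :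
    kron ℓ lam mu nu = 0 := by
  have hsupp := (supportedIn_vdm_Zv.mul (supportedIn_det_cauchyFactor ⟨0, hℓ⟩)).mul
    (supportedIn_prod_offSlice ⟨0, hℓ⟩)
  rw [kron_eq_coeff ⟨0, hℓ⟩ (ℓ.choose 2), Zv_pow_mul_vdm_mul_cauchyKernel]
  exact hsupp _ (single_add_kronExp_notMem hℓ hlam hmu hnsum hi _)

/-- if `|λ_i - μ_i| > t = n - ν₁` for some `i`, then `g(λ,μ,ν) = 0`. -/
theorem stmt0 (ℓ n : ℕ) (hℓ : 1 ≤ ℓ)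
    (lam mu nu : Fin ℓ → ℕ)
    (hlam : IsPartition lam) (hmu : IsPartition mu) (hnu : IsPartition nu)
    (hlsum : ∑ i, lam i = n) (hmsum : ∑ i, mu i = n) (hnsum : ∑ i, nu i = n)
    (i : Fin ℓ)
    (hi : ((n : ℤ) - (nu ⟨0, hℓ⟩ : ℤ)) < |(lam i : ℤ) - (mu i : ℤ)|) :
    kron ℓ lam mu nu = 0 :=
  stmt0_general ℓ n hℓ lam mu nu hlam hmu hnsum i hi
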